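/- arXiv:hep-th/9605123 — 4 statements merged into one kernel-verified Lean document; each statement's English description precedes it below -/
import Mathlib

section
/- Extreme component of the special basis: let β = (n,…,n, n−1,…,n−1, …, 1,…,1) be the multi-index consisting of decreasing blocks, each value repeated m times, and let J_i^β = { j : β_j = i }. Then w_β^{β}(z_1,…,z_N) = Π_{i<j} Π_{k∈J_i^β, l∈J_j^β} b(z_k/z_l), where b(z) = (1−z)q/(1−zq²). -/
noncomputable section

/-- Entries of the trigonometric R-matrix of the vector representation of
`U_q(sl_n^)`: the row index is `(ε₁, ε₂)`, the column index is `(ε'₁, ε'₂)`. -/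
def Rent (n : ℕ) (q z : ℂ) (r c : Fin n × Fin n) : ℂ :=
  if r = c then (if r.1 = r.2 then 1 else (1 - z) * q / (1 - z * q ^ 2))
  else if r.1 = c.2 ∧ r.2 = c.1 then
    (if r.1 < r.2 then (1 - q ^ 2) * z / (1 - z * q ^ 2) else (1 - q ^ 2) / (1 - z * q ^ 2))
  else 0

/-- `R_{ab}(z)` acting on `V^{⊗N}`. -/
def Rop (n : ℕ) (q : ℂ) (N : ℕ) (a b : Fin N) (z : ℂ) :
    Matrix (Fin N → Fin n) (Fin N → Fin n) ℂ :=
  Matrix.of fun ε ε' => Rent n q z (ε a, ε b) (ε' a, ε' b) *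
    ∏ i ∈ Finset.univ.filter (fun i => i ≠ a ∧ i ≠ b), (if ε i = ε' i then (1 : ℂ) else 0)

/-- The operator `R_{1,N+1}(z₁/t) ⋯ R_{N,N+1}(z_N/t)` on `V^{⊗(N+1)}`. -/
def BigR (n : ℕ) (q : ℂ) (N : ℕ) (z : Fin N → ℂ) (t : ℂ) :
    Matrix (Fin (N + 1) → Fin n) (Fin (N + 1) → Fin n) ℂ :=
  ((List.finRange N).map (fun (j : Fin N) =>
    Rop n q (N + 1) j.castSucc (Fin.last N) (z j / t))).prod

/-- The quantum monodromy operator `T_{εε'}(z₁,…,z_N | t) ∈ End(V^{⊗N})`: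
the `(ε, ε')` block of `BigR` with respect to the basis of the last factor. -/
def Tmat (n : ℕ) (q : ℂ) (N : ℕ) (z : Fin N → ℂ) (t : ℂ) (e e' : Fin n) :
    Matrix (Fin N → Fin n) (Fin N → Fin n) ℂ :=
  Matrix.of fun a b => BigR n q N z t (Fin.snoc a e) (Fin.snoc b e')

/-- The vacuum vector `Ω = v₁ ⊗ ⋯ ⊗ v₁`. -/
def Omega (n N : ℕ) : (Fin N → Fin n) → ℂ :=
  fun ε => if ∀ j, (ε j : ℕ) = 0 then 1 else 0

/-- The special basis vector
`w_α = Π_l T_{1n}(z|z_l^{(n)}) ⋯ Π_l T_{12}(z|z_l^{(2)}) Ω`, where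
`z_1^{(i)}, …, z_m^{(i)}` is the subsequence of the `z_j` at positions `j`
with `α_j = i` (values in `Fin n`, i.e. `v_i ↔ i - 1`). -/
def wvec (n : ℕ) (hn : 0 < n) (q : ℂ) (N : ℕ) (α : Fin N → Fin n) (z : Fin N → ℂ) :
    (Fin N → Fin n) → ℂ :=
  (((((List.finRange n).reverse.dropLast)).map (fun c =>
      ((List.finRange N).filter (fun j => α j = c)).map
        (fun j => Tmat n q N z (z j) ⟨0, hn⟩ c))).flatten).prod.mulVec (Omega n N)


/-- `b(z) = (1-z)q/(1-zq²)`. -/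
def bfun (q z : ℂ) : ℂ := (1 - z) * q / (1 - z * q ^ 2)

/-!
Reading the monodromy `R_{1,N+1}(z₁/t) ⋯ R_{N,N+1}(z_N/t)` as a transfer matrix, the auxiliary
space of `T_{1,β_k}(z | z_k)` enters in `v_1` and must leave in `v_{β_k}`. Applied to the row of
the state `(v_1, …, v_1, v_{β_k}, v_{β_{k+1}}, …)`, the sites before `k` carry `v_1` and act
trivially, at site `k` the R-matrix at spectral parameter `1` is the flip, the rest of the block of
`k` carries `v_{β_k}` and acts trivially again, and on the later sites, which carry smaller
indices, only the diagonal entries `b(z_p/z_k)` are compatible with the auxiliary index ending as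
`v_{β_k}`. So each factor moves the row by one position towards the vacuum row with the weight
`∏_{β_p < β_k} b(z_p/z_k)`; as `β` decreases, the ordered product defining `w_β` runs over the
positions `k < (n-1)m` in their natural order, and the weights multiply to the claimed product.
-/

open Finset

section RMatrix

variable {n : ℕ} (q : ℂ)

theorem Rent_self_self (w : ℂ) (e : Fin n) (c : Fin n × Fin n) :
    Rent n q w (e, e) c = if c = (e, e) then 1 else 0 := by
  obtain ⟨c₁, c₂⟩ := c
  simp only [Rent, Prod.mk.injEq]
  grind

theorem Rent_one (hq : 1 - q ^ 2 ≠ 0) (r c : Fin n × Fin n) :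
    Rent n q 1 r c = if c = r.swap then 1 else 0 := by
  obtain ⟨r₁, r₂⟩ := r
  obtain ⟨c₁, c₂⟩ := c
  simp only [Rent, Prod.swap_prod_mk, Prod.mk.injEq, one_mul, mul_one, sub_self, zero_mul,
    zero_div, div_self hq]
  grind

theorem Rent_self_of_ne (w : ℂ) {a b : Fin n} (h : a ≠ b) :
    Rent n q w (a, b) (a, b) = bfun q w := by
  simp [Rent, bfun, h]

theorem eq_or_eq_swap_of_Rent_ne_zero {w : ℂ} {r c : Fin n × Fin n} (h : Rent n q w r c ≠ 0) :
    c = r ∨ c = r.swap := by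
  obtain ⟨r₁, r₂⟩ := r
  obtain ⟨c₁, c₂⟩ := c
  simp only [Rent, Prod.swap_prod_mk, Prod.mk.injEq] at h ⊢
  grind

end RMatrix

section LocalOperator

variable {n M : ℕ} (q w : ℂ) {a b : Fin M}

theorem Rop_apply_of_agree {x y : Fin M → Fin n} (h : ∀ i, i ≠ a → i ≠ b → x i = y i) :
    Rop n q M a b w x y = Rent n q w (x a, x b) (y a, y b) := by
  rw [Rop, Matrix.of_apply, Finset.prod_eq_one, mul_one]
  intro i hi
  rw [Finset.mem_filter] at hi
  rw [if_pos (h i hi.2.1 hi.2.2)]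

theorem agree_and_Rent_ne_zero_of_Rop_ne_zero {x y : Fin M → Fin n}
    (h : Rop n q M a b w x y ≠ 0) :
    (∀ i, i ≠ a → i ≠ b → x i = y i) ∧ Rent n q w (x a, x b) (y a, y b) ≠ 0 := by
  rw [Rop, Matrix.of_apply] at h
  refine ⟨fun i hia hib => ?_, left_ne_zero_of_mul h⟩
  by_contra hne
  exact right_ne_zero_of_mul h (Finset.prod_eq_zero (i := i) (by simp [hia, hib]) (if_neg hne))

theorem Rop_apply_of_Rent_eq_ite (hab : a ≠ b) {x : Fin M → Fin n} {u : Fin n × Fin n}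
    (hrow : ∀ c, Rent n q w (x a, x b) c = if c = u then 1 else 0) (y : Fin M → Fin n) :
    Rop n q M a b w x y =
      if y = Function.update (Function.update x a u.1) b u.2 then 1 else 0 := by
  split_ifs with hy
  · subst hy
    rw [Rop_apply_of_agree _ _ (fun i hia hib => by simp [hia, hib]), hrow]
    simp [Function.update_of_ne hab]
  · by_contra h0
    obtain ⟨hagree, hR⟩ := agree_and_Rent_ne_zero_of_Rop_ne_zero q w h0
    rw [hrow, ite_ne_right_iff] at hR
    apply hy
    funext i
    by_cases hib : i = b
    · subst hib; simp [← hR.1]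
    by_cases hia : i = a
    · subst hia; simp [hib, ← hR.1]
    · simp [hia, hib, hagree i hia hib]

theorem Rop_apply_of_eq (hab : a ≠ b) {x : Fin M → Fin n} (hx : x a = x b)
    (y : Fin M → Fin n) : Rop n q M a b w x y = if y = x then 1 else 0 := by
  rw [Rop_apply_of_Rent_eq_ite q w hab (u := (x a, x b)) (by rw [hx]; exact Rent_self_self q w _)]
  simp

theorem Rop_one_apply (hq : 1 - q ^ 2 ≠ 0) (hab : a ≠ b) (x y : Fin M → Fin n) :
    Rop n q M a b 1 x y = if y = x ∘ Equiv.swap a b then 1 else 0 := by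
  rw [Rop_apply_of_Rent_eq_ite q 1 hab (Rent_one q hq _)]
  congr 2
  funext i
  by_cases hib : i = b
  · subst hib; simp
  by_cases hia : i = a
  · subst hia; simp [hab]
  · simp [hia, hib, Equiv.swap_apply_of_ne_of_ne hia hib]

end LocalOperator

theorem List.prod_map_take_finRange_succ {M : Type*} [Monoid M] {N j : ℕ} (f : Fin N → M)
    (hj : j < N) :
    (((List.finRange N).take (j + 1)).map f).prod =
      (((List.finRange N).take j).map f).prod * f ⟨j, hj⟩ := by
  rw [List.take_add_one, List.getElem?_eq_getElem (by simpa using hj), List.map_append,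
    List.prod_append]
  simp

section Chain

variable {R S : Type*} [CommSemiring R] [Fintype S] [DecidableEq S]

theorem Matrix.prod_map_take_finRange_apply_of_chain {N K : ℕ} (hK : K ≤ N)
    (G : Fin N → Matrix S S R) (s : ℕ → S) (C : Fin N → R)
    (hG : ∀ i : Fin N, (i : ℕ) < K →
      ∀ y, G i (s i) y = C i * if y = s (i + 1) then 1 else 0)
    (y : S) :
    (((List.finRange N).take K).map G).prod (s 0) y =
      (∏ i : Fin N with i.val < K, C i) * if y = s K then 1 else 0 := by
  induction K generalizing y with
  | zero => simp [Matrix.one_apply, eq_comm]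
  | succ K ih =>
    have hKN : K < N := hK
    have hinsert : univ.filter (fun i : Fin N => i.val < K + 1) =
        insert ⟨K, hKN⟩ (univ.filter fun i : Fin N => i.val < K) := by
      ext i
      simp [Fin.ext_iff]
      omega
    rw [List.prod_map_take_finRange_succ G hKN, Matrix.mul_apply]
    simp only [ih hKN.le (fun i hi => hG i (by omega)), mul_ite, mul_one, mul_zero, ite_mul,
      zero_mul, Finset.sum_ite_eq', Finset.mem_univ, if_true]
    rw [hG ⟨K, hKN⟩ (Nat.lt_succ_self K), hinsert, Finset.prod_insert (by simp)]
    split_ifs <;> ring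

end Chain

def partialMonodromy (n : ℕ) (q : ℂ) (N : ℕ) (z : Fin N → ℂ) (t : ℂ) (j : ℕ) :
    Matrix (Fin (N + 1) → Fin n) (Fin (N + 1) → Fin n) ℂ :=
  (((List.finRange N).take j).map fun p =>
    Rop n q (N + 1) p.castSucc (Fin.last N) (z p / t)).prod

section PartialMonodromy

variable {n N : ℕ} (q : ℂ) (z : Fin N → ℂ) (t : ℂ)

theorem partialMonodromy_succ {j : ℕ} (hj : j < N) :
    partialMonodromy n q N z t (j + 1) = partialMonodromy n q N z t j *
      Rop n q (N + 1) (Fin.castSucc ⟨j, hj⟩) (Fin.last N) (z ⟨j, hj⟩ / t) :=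
  List.prod_map_take_finRange_succ _ hj

theorem Tmat_apply (e e' : Fin n) (x y : Fin N → Fin n) :
    Tmat n q N z t e e' x y = partialMonodromy n q N z t N (Fin.snoc x e) (Fin.snoc y e') := by
  rw [Tmat, Matrix.of_apply, BigR, partialMonodromy, List.take_of_length_le (by simp)]

theorem partialMonodromy_apply_castSucc_of_ne_zero {j : ℕ} {x y : Fin (N + 1) → Fin n}
    (h : partialMonodromy n q N z t j x y ≠ 0) (p : Fin N) (hp : j ≤ p) :
    y p.castSucc = x p.castSucc := by
  induction j generalizing y with
  | zero =>
    rw [partialMonodromy, List.take_zero, List.map_nil, List.prod_nil, Matrix.one_apply] at h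
    rw [(ite_ne_right_iff.mp h).1]
  | succ j ih =>
    have hj : j < N := by omega
    rw [partialMonodromy_succ q z t hj, Matrix.mul_apply] at h
    obtain ⟨w, -, hw⟩ := Finset.exists_ne_zero_of_sum_ne_zero h
    have hagree := (agree_and_Rent_ne_zero_of_Rop_ne_zero q _ (right_ne_zero_of_mul hw)).1
    rw [← ih (left_ne_zero_of_mul hw) (by omega)]
    refine (hagree p.castSucc (fun he => ?_) (Fin.castSucc_ne_last p)).symm
    have := congrArg Fin.val he
    simp at this
    omega

theorem partialMonodromy_apply_of_ne {x₀ x : Fin (N + 1) → Fin n} {lo hi : ℕ}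
    (hlohi : lo ≤ hi) (hhi : hi ≤ N)
    (hlo : ∀ y, y (Fin.last N) = x (Fin.last N) →
      partialMonodromy n q N z t lo x₀ y = if y = x then 1 else 0)
    (hx : ∀ p : Fin N, lo ≤ p →
      x₀ p.castSucc = x p.castSucc ∧ x p.castSucc ≠ x (Fin.last N))
    (y : Fin (N + 1) → Fin n) (hy : y (Fin.last N) = x (Fin.last N)) :
    partialMonodromy n q N z t hi x₀ y =
      (∏ p : Fin N with lo ≤ p.val ∧ p.val < hi, bfun q (z p / t)) *
        if y = x then 1 else 0 := by
  induction hi, hlohi using Nat.le_induction generalizing y with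
  | base =>
    rw [hlo y hy, Finset.filter_false_of_mem (by omega), Finset.prod_empty, one_mul]
  | succ j hj ih =>
    have hjN : j < N := by omega
    set jf : Fin N := ⟨j, hjN⟩
    rw [partialMonodromy_succ q z t hjN, Matrix.mul_apply, Finset.sum_eq_single y ?_ (by simp)]
    · rw [Rop_apply_of_agree _ _ (fun _ _ _ => rfl), ih (by omega) y hy]
      split_ifs with hyx
      · subst hyx
        have hinsert : univ.filter (fun p : Fin N => lo ≤ p.val ∧ p.val < j + 1) =
            insert jf (univ.filter fun p : Fin N => lo ≤ p.val ∧ p.val < j) := by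
          ext p
          simp [jf, Fin.ext_iff]
          omega
        rw [Rent_self_of_ne q _ (hx jf hj).2, hinsert, Finset.prod_insert (by simp [jf])]
        ring
      · simp
    · intro w _ hwy
      by_contra h0
      obtain ⟨hagree, hR⟩ :=
        agree_and_Rent_ne_zero_of_Rop_ne_zero q _ (right_ne_zero_of_mul h0)
      have hw := partialMonodromy_apply_castSucc_of_ne_zero q z t (left_ne_zero_of_mul h0) jf le_rfl
      rcases eq_or_eq_swap_of_Rent_ne_zero q hR with hc | hc
      · apply hwy
        funext i
        refine Fin.lastCases ?_ (fun p => ?_) i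
        · exact (congrArg Prod.snd hc).symm
        · by_cases hp : p = jf
          · subst hp; exact (congrArg Prod.fst hc).symm
          · exact hagree _ (fun h => hp (Fin.castSucc_injective _ h)) (Fin.castSucc_ne_last p)
      -- a flip at site `j` would move `x₀ j` into the auxiliary space, which must end as
      -- `x (last) ≠ x₀ j`
      · have hwj : w jf.castSucc = x (Fin.last N) := (congrArg Prod.snd hc).symm.trans hy
        exact (hx jf hj).2 (by rw [← (hx jf hj).1, ← hw, hwj])

end PartialMonodromy

theorem Tmat_apply_of_block {n N : ℕ} {q : ℂ} (hq : 1 - q ^ 2 ≠ 0) {z : Fin N → ℂ}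
    {k : Fin N} (hz : z k ≠ 0) {σ : Fin N → Fin n} {a : Fin n} {E : ℕ} (hkE : (k : ℕ) < E)
    (hEN : E ≤ N)
    (hbefore : ∀ p, p < k → σ p = a)
    (hblock : ∀ p : Fin N, k < p → (p : ℕ) < E → σ p = σ k)
    (hafter : ∀ p : Fin N, E ≤ (p : ℕ) → σ p ≠ σ k) (y : Fin N → Fin n) :
    Tmat n q N z (z k) a (σ k) σ y =
      (∏ p : Fin N with E ≤ p.val, bfun q (z p / z k)) *
        if y = Function.update σ k a then 1 else 0 := by
  set x₀ : Fin (N + 1) → Fin n := Fin.snoc σ a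
  set x₁ : Fin (N + 1) → Fin n := Fin.snoc (Function.update σ k a) (σ k)
  have hswap : x₀ ∘ Equiv.swap k.castSucc (Fin.last N) = x₁ := by
    funext i
    refine Fin.lastCases ?_ (fun p => ?_) i
    · simp [x₀, x₁, -Fin.snoc_update]
    · by_cases hp : p = k
      · subst hp; simp [x₀, x₁, -Fin.snoc_update]
      · have hne : p.castSucc ≠ k.castSucc := fun h => hp (Fin.castSucc_injective _ h)
        simp [x₀, x₁, -Fin.snoc_update, hp,
          Equiv.swap_apply_of_ne_of_ne hne (Fin.castSucc_ne_last p)]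
  have hblockRow : ∀ y, partialMonodromy n q N z (z k) E x₀ y = if y = x₁ then 1 else 0 := by
    intro y
    have := Matrix.prod_map_take_finRange_apply_of_chain hEN
      (fun p => Rop n q (N + 1) p.castSucc (Fin.last N) (z p / z k))
      (fun i => if i ≤ k then x₀ else x₁) 1 ?_ y
    · simpa [partialMonodromy, hkE.not_ge] using this
    intro i hi y
    rcases lt_trichotomy i k with hik | rfl | hik
    · have hx₀ : x₀ i.castSucc = x₀ (Fin.last N) := by simp [x₀, hbefore i hik]
      simpa [hik.le, Nat.succ_le_of_lt hik] using
        Rop_apply_of_eq q _ (Fin.castSucc_ne_last i) hx₀ y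
    · simpa [div_self hz, hswap] using Rop_one_apply q hq (Fin.castSucc_ne_last i) x₀ y
    · have hx₁ : x₁ i.castSucc = x₁ (Fin.last N) := by
        simp [x₁, -Fin.snoc_update, hik.ne', hblock i hik hi]
      simpa [hik.not_ge, (Nat.lt_succ_of_lt hik).not_ge] using
        Rop_apply_of_eq q _ (Fin.castSucc_ne_last i) hx₁ y
  have hafterRow := partialMonodromy_apply_of_ne q z (z k) hEN le_rfl (fun y _ => hblockRow y)
    (fun p hp => ?_) (Fin.snoc y (σ k)) (by simp [x₁, -Fin.snoc_update])
  · rw [Tmat_apply, hafterRow]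
    congr 1
    · exact Finset.prod_congr (by ext p; simp) fun _ _ => rfl
    · simp only [x₁, Fin.snoc_inj, and_true]
  · have hpk : p ≠ k := fun h => by rw [h] at hp; omega
    simp [x₀, x₁, -Fin.snoc_update, hpk, hafter p hp]

theorem List.dropLast_reverse_finRange {n : ℕ} (hn : 0 < n) :
    (List.finRange n).reverse.dropLast =
      ((List.finRange n).filter (· ≠ ⟨0, hn⟩)).reverse := by
  obtain ⟨n, rfl⟩ : ∃ n', n = n' + 1 := ⟨n - 1, by omega⟩
  rw [List.dropLast_reverse, List.finRange_succ, List.tail_cons, List.filter_cons_of_neg (by simp),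
    List.filter_map, List.filter_eq_self.mpr fun i _ => by simp [Fin.succ_ne_zero i]]

theorem List.flatten_map_filter_finRange_of_antitone {N : ℕ} {γ : Type*} [LinearOrder γ]
    {α : Fin N → γ} (hα : Antitone α) {cs : List γ} (hcs : cs.Pairwise (· > ·)) :
    (cs.map fun c => (List.finRange N).filter (α · = c)).flatten =
      (List.finRange N).filter (α · ∈ cs) := by
  refine List.Pairwise.eq_of_mem_iff (r := (· < ·)) ?_ ((List.pairwise_lt_finRange N).filter _) ?_
  · refine List.pairwise_flatten.mpr ⟨?_, List.pairwise_map.mpr (hcs.imp ?_)⟩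
    · simp only [List.mem_map]
      rintro _ ⟨c, -, rfl⟩
      exact (List.pairwise_lt_finRange N).filter _
    · intro c c' hcc' i hi j hj
      simp only [List.mem_filter, decide_eq_true_eq] at hi hj
      exact lt_of_not_ge fun hji => (hcc'.trans_le (hi.2 ▸ hj.2 ▸ hα hji)).false
  · intro j
    simp

theorem wvec_eq_of_antitone {n N : ℕ} (hn : 0 < n) (q : ℂ) {α : Fin N → Fin n}
    (hα : Antitone α) (z : Fin N → ℂ) :
    wvec n hn q N α z = (((List.finRange N).filter (α · ≠ ⟨0, hn⟩)).map
      fun j => Tmat n q N z (z j) ⟨0, hn⟩ (α j)).prod.mulVec (Omega n N) := by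
  have hcs : ((List.finRange n).reverse.dropLast).Pairwise (· > ·) := by
    rw [List.dropLast_reverse_finRange hn, List.pairwise_reverse]
    exact (List.pairwise_lt_finRange n).filter _
  rw [wvec]
  have hpositions : (List.finRange N).filter (α · ≠ ⟨0, hn⟩) =
      (((List.finRange n).reverse.dropLast).map fun c =>
        (List.finRange N).filter (α · = c)).flatten := by
    rw [List.flatten_map_filter_finRange_of_antitone hα hcs]
    simp [List.dropLast_reverse_finRange hn]
  rw [hpositions, List.map_flatten, List.map_map]
  congr 3
  refine List.map_congr_left fun c _ => List.map_congr_left fun j hj => ?_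
  rw [(of_decide_eq_true (List.mem_filter.mp hj).2 : α j = c)]

theorem List.filter_finRange_val_lt (N K : ℕ) :
    (List.finRange N).filter (fun j => j.val < K) = (List.finRange N).take K := by
  refine List.Pairwise.eq_of_mem_iff (r := (· < ·)) ((List.pairwise_lt_finRange N).filter _)
    ((List.pairwise_lt_finRange N).sublist (List.take_sublist _ _)) fun j => ?_
  simp [List.mem_take_iff_getElem, Fin.ext_iff]

theorem mulVec_Omega_apply {n N : ℕ} (hn : 0 < n)
    (A : Matrix (Fin N → Fin n) (Fin N → Fin n) ℂ) (x : Fin N → Fin n) :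
    A.mulVec (Omega n N) x = A x fun _ => ⟨0, hn⟩ := by
  have hΩ : Omega n N = fun y => if y = fun _ => ⟨0, hn⟩ then 1 else 0 := by
    funext y
    simp [Omega, funext_iff, Fin.ext_iff]
  simp [Matrix.mulVec, dotProduct, hΩ]

def vacuumPrefix {n N : ℕ} (a : Fin n) (β : Fin N → Fin n) (i : ℕ) : Fin N → Fin n :=
  fun p => if (p : ℕ) < i then a else β p

theorem vacuumPrefix_zero {n N : ℕ} (a : Fin n) (β : Fin N → Fin n) :
    vacuumPrefix a β 0 = β :=
  rfl

theorem Fin.val_div_lt_of_eq_mul {n m N : ℕ} (hm : 0 < m) (hN : N = m * n) (p : Fin N) :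
    (p : ℕ) / m < n :=
  (Nat.div_lt_iff_lt_mul hm).mpr (by rw [mul_comm, ← hN]; exact p.isLt)

section BlockMultiIndex

variable {n m N : ℕ} {β : Fin N → Fin n} (hm : 0 < m) (hN : N = m * n)
  (hβ : ∀ j : Fin N, (β j : ℕ) = n - 1 - (j : ℕ) / m)
include hm hβ

theorem blockIndex_eq_zero_iff (j : Fin N) : (β j : ℕ) = 0 ↔ (n - 1) * m ≤ j := by
  rw [← Nat.le_div_iff_mul_le hm, hβ, Nat.sub_eq_zero_iff_le]

theorem filter_finRange_blockIndex_ne_zero (hn : 0 < n) :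
    (List.finRange N).filter (β · ≠ ⟨0, hn⟩) = (List.finRange N).take ((n - 1) * m) := by
  rw [← List.filter_finRange_val_lt]
  refine List.filter_congr fun j _ => ?_
  simp [Fin.ext_iff, blockIndex_eq_zero_iff hm hβ j]

theorem vacuumPrefix_blockIndex (hn : 0 < n) :
    vacuumPrefix ⟨0, hn⟩ β ((n - 1) * m) = fun _ => ⟨0, hn⟩ := by
  funext p
  by_cases hp : (p : ℕ) < (n - 1) * m
  · simp [vacuumPrefix, hp]
  · simp [vacuumPrefix, hp, Fin.ext_iff, (blockIndex_eq_zero_iff hm hβ p).mpr (not_lt.mp hp)]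

theorem prod_filter_blockIndex_lt {M : Type*} [CommMonoid M] (f : Fin N → Fin N → M) :
    ∏ i : Fin N with i.val < (n - 1) * m, ∏ p : Fin N with β p < β i, f p i =
      ∏ p : Fin N × Fin N with β p.1 < β p.2, f p.1 p.2 := by
  have hfactor : ∀ i : Fin N,
      ∏ p : Fin N with β p < β i, f p i ≠ 1 → i.val < (n - 1) * m :=
    fun i hi => not_le.mp fun hiK => hi <| Finset.prod_eq_one fun p hp =>
      absurd (Finset.mem_filter.mp hp).2
        (by simp [Fin.le_def, (blockIndex_eq_zero_iff hm hβ i).mpr hiK])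
  rw [Finset.prod_filter_of_ne fun i _ => hfactor i]
  simp only [Finset.prod_filter]
  rw [Fintype.prod_prod_type, Finset.prod_comm]

include hN

theorem blockIndex_lt_iff (p j : Fin N) : β p < β j ↔ (j : ℕ) / m < (p : ℕ) / m := by
  have := Fin.val_div_lt_of_eq_mul hm hN p
  have := Fin.val_div_lt_of_eq_mul hm hN j
  rw [Fin.lt_def, hβ, hβ]
  omega

theorem antitone_blockIndex : Antitone β := fun p j hpj =>
  le_of_not_gt fun h =>
    ((blockIndex_lt_iff hm hN hβ p j).mp h).not_ge (Nat.div_le_div_right (Fin.le_def.mp hpj))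

theorem Tmat_apply_vacuumPrefix {q : ℂ} (hq : 1 - q ^ 2 ≠ 0) {z : Fin N → ℂ} {j : Fin N}
    (hz : z j ≠ 0) (hn : 0 < n) (y : Fin N → Fin n) :
    Tmat n q N z (z j) ⟨0, hn⟩ (β j) (vacuumPrefix ⟨0, hn⟩ β j) y =
      (∏ p : Fin N with β p < β j, bfun q (z p / z j)) *
        if y = vacuumPrefix ⟨0, hn⟩ β (j + 1) then 1 else 0 := by
  have hjE : (j : ℕ) < ((j : ℕ) / m + 1) * m := Nat.lt_mul_of_div_lt (Nat.lt_succ_self _) hm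
  have hEN : ((j : ℕ) / m + 1) * m ≤ N :=
    (Nat.mul_le_mul_right m (Fin.val_div_lt_of_eq_mul hm hN j)).trans_eq
      ((mul_comm n m).trans hN.symm)
  have hafter : ∀ p : Fin N, ((j : ℕ) / m + 1) * m ≤ p ↔ β p < β j := fun p => by
    rw [blockIndex_lt_iff hm hN hβ, ← Nat.succ_le_iff, Nat.le_div_iff_mul_le hm]
  have := Tmat_apply_of_block (q := q) hq hz (a := ⟨0, hn⟩)
    (σ := vacuumPrefix ⟨0, hn⟩ β j) hjE hEN (fun p hp => if_pos hp) (fun p hjp hpE => ?_)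
    (fun p hp => ?_) y
  · convert this using 3
    · simp [vacuumPrefix]
    · exact Finset.filter_congr fun p _ => (hafter p).symm
    · congr! 1
      funext p
      by_cases hpj : p = j
      · simp [vacuumPrefix, hpj]
      · simp [vacuumPrefix, hpj, le_iff_lt_or_eq, Fin.val_ne_of_ne hpj]
  · have hdiv : (p : ℕ) / m = (j : ℕ) / m :=
      le_antisymm (Nat.lt_succ_iff.mp (Nat.div_lt_of_lt_mul (by rwa [mul_comm])))
        (Nat.div_le_div_right hjp.le)
    simp [vacuumPrefix, hjp.not_gt, Fin.ext_iff, hβ, hdiv]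
  · have hpj : ¬ (p : ℕ) < j := fun h => by omega
    simp only [vacuumPrefix, hpj, lt_irrefl, if_false]
    exact ((hafter p).mp hp).ne

end BlockMultiIndex

/-- the extreme component of the special basis: for the
multi-index `β = (n,…,n, n-1,…,n-1, …, 1,…,1)` (each value repeated `m`
times, in `Fin n`-coding `β j = n - 1 - j/m`) one has
`w_β^β(z₁,…,z_N) = Π_{β_k < β_l} b(z_k/z_l)`. -/
theorem extreme_component (n m N : ℕ) (hn : 2 ≤ n) (hm : 1 ≤ m) (hN : N = m * n)
    (q : ℂ) (z : Fin N → ℂ) (hz : ∀ j, z j ≠ 0)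
    (hden : ∀ i j : Fin N, 1 - (z i / z j) * q ^ 2 ≠ 0)
    (β : Fin N → Fin n) (hβ : ∀ j : Fin N, (β j : ℕ) = n - 1 - ((j : ℕ) / m)) :
    wvec n (by omega) q N β z β
      = ∏ p ∈ Finset.univ.filter (fun p : Fin N × Fin N => β p.1 < β p.2),
          bfun q (z p.1 / z p.2) := by
  have hn0 : 0 < n := by omega
  have hN0 : 0 < N := hN ▸ Nat.mul_pos hm hn0
  have hq : 1 - q ^ 2 ≠ 0 := by simpa [div_self (hz _)] using hden ⟨0, hN0⟩ ⟨0, hN0⟩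
  have hK : (n - 1) * m ≤ N := by
    rw [hN, mul_comm m]
    exact Nat.mul_le_mul_right m (Nat.sub_le n 1)
  have hchain := Matrix.prod_map_take_finRange_apply_of_chain hK _ (vacuumPrefix ⟨0, hn0⟩ β) _
    (fun i _ y => Tmat_apply_vacuumPrefix hm hN hβ hq (hz i) hn0 y) (fun _ => ⟨0, hn0⟩)
  rw [vacuumPrefix_zero, vacuumPrefix_blockIndex hm hβ, if_pos rfl, mul_one] at hchain
  rw [wvec_eq_of_antitone hn0 q (antitone_blockIndex hm hN hβ) z, mulVec_Omega_apply hn0,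
    filter_finRange_blockIndex_ne_zero hm hβ hn0, hchain, prod_filter_blockIndex_lt hm hβ]
end
end

section
/- For every integer n ≥ 2 and λ, f_λ^{(N+n−1)}(y | z_1,…,z_N, aτ, aτ³,…,aτ^{2n−3}) = Σ_{ρ=0}^{n−1} (−1)^ρ σ_ρ(aτ, aτ³, …, aτ^{2n−3}) f_{λ−ρ}^{(N)}(y | z_1,…,z_N). -/
noncomputable section

/-- The `k`-th elementary symmetric polynomial `σ_k(z₁,…,z_N)`
(`σ_0 = 1`, `σ_k = 0` for `k > N`). -/
def esymF {N : ℕ} (z : Fin N → ℂ) (k : ℕ) : ℂ :=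
  ∑ s ∈ Finset.powersetCard k (Finset.univ : Finset (Fin N)), ∏ i ∈ s, z i

/-- `f_λ^{(N)}(y | z₁,…,z_N) = Σ_{κ=0}^{λ-1} (-1)^κ ((yτ)^{λ-κ} - (yτ⁻¹)^{λ-κ}) σ_κ(z)`,
with `τ = q⁻¹` (so `τ⁻¹ = q`); by the empty-sum convention `f_λ = 0` for `λ ≤ 0`. -/
def fpoly (q : ℂ) {N : ℕ} (lam : ℕ) (y : ℂ) (z : Fin N → ℂ) : ℂ :=
  ∑ κ ∈ Finset.range lam,
    (-1 : ℂ) ^ κ * ((y * q⁻¹) ^ (lam - κ) - (y * q) ^ (lam - κ)) * esymF z κ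

open Polynomial in
lemma genpoly_coeff {N : ℕ} (z : Fin N → ℂ) (k : ℕ) :
    (∏ i : Fin N, (Polynomial.C (z i) * Polynomial.X + 1)).coeff k = esymF z k := by
  rw [Finset.prod_add, Polynomial.finset_sum_coeff]
  have : ∀ t : Finset (Fin N),
      ((∏ i ∈ t, (Polynomial.C (z i) * Polynomial.X)) *
          ∏ i ∈ Finset.univ \ t, (1 : Polynomial ℂ)).coeff k
        = if t.card = k then (∏ i ∈ t, z i) else 0 := by
    intro t
    rw [Finset.prod_const_one, mul_one, Finset.prod_mul_distrib, Finset.prod_const,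
      ← map_prod, Polynomial.coeff_C_mul, Polynomial.coeff_X_pow]
    by_cases h : t.card = k
    · simp [h]
    · simp [h, Ne.symm h]
  simp only [this]
  rw [esymF, Finset.powersetCard_eq_filter, Finset.sum_filter]

lemma esymF_append {N M : ℕ} (z : Fin N → ℂ) (w : Fin M → ℂ) (k : ℕ) :
    esymF (Fin.append z w) k
      = ∑ ρ ∈ Finset.range (k + 1), esymF w ρ * esymF z (k - ρ) := by
  have h := genpoly_coeff (Fin.append z w) k
  rw [Fin.prod_univ_add] at h
  simp only [Fin.append_left, Fin.append_right] at h
  rw [mul_comm, Polynomial.coeff_mul, Finset.Nat.sum_antidiagonal_eq_sum_range_succ_mk] at h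
  simp only [genpoly_coeff] at h
  exact h.symm

lemma esymF_eq_zero {N : ℕ} (z : Fin N → ℂ) {k : ℕ} (h : N < k) : esymF z k = 0 := by
  rw [esymF, Finset.powersetCard_eq_empty.2 (by simpa using h), Finset.sum_empty]

lemma fpoly_zero (q : ℂ) {N : ℕ} (y : ℂ) (z : Fin N → ℂ) : fpoly q 0 y z = 0 := by
  simp [fpoly]

/-- for `n ≥ 2`,
`f_λ^{(N+n-1)}(y | z₁,…,z_N, aτ, aτ³, …, aτ^{2n-3})
  = Σ_{ρ=0}^{n-1} (-1)^ρ σ_ρ(aτ, aτ³, …, aτ^{2n-3}) f_{λ-ρ}^{(N)}(y|z)`,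
where `τ = q⁻¹` and `f_μ = 0` for `μ ≤ 0`. -/
theorem fpoly_block_recursion (q : ℂ) (hq : q ≠ 0) (n : ℕ) (hn : 2 ≤ n)
    (N lam : ℕ) (y a : ℂ) (z : Fin N → ℂ) :
    fpoly q lam y (Fin.append z (fun i : Fin (n - 1) => a * (q⁻¹) ^ (2 * (i : ℕ) + 1)))
      = ∑ ρ ∈ Finset.range n, (-1 : ℂ) ^ ρ *
          esymF (fun i : Fin (n - 1) => a * (q⁻¹) ^ (2 * (i : ℕ) + 1)) ρ *
          fpoly q (lam - ρ) y z := by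
  set w : Fin (n - 1) → ℂ := fun i => a * (q⁻¹) ^ (2 * (i : ℕ) + 1) with hw
  set G : ℕ → ℂ := fun m => (y * q⁻¹) ^ m - (y * q) ^ m with hG
  set T : ℕ → ℂ := fun ρ => (-1 : ℂ) ^ ρ * esymF w ρ * fpoly q (lam - ρ) y z with hT
  have key : fpoly q lam y (Fin.append z w) = ∑ ρ ∈ Finset.range lam, T ρ := by
    unfold fpoly
    simp_rw [esymF_append z w, Finset.mul_sum]
    have comm := Finset.sum_Ico_Ico_comm 0 lam
      (fun ρ κ => (-1 : ℂ) ^ κ * G (lam - κ) * (esymF w ρ * esymF z (κ - ρ)))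
    simp only [Nat.Ico_zero_eq_range] at comm
    rw [← comm]
    refine Finset.sum_congr rfl fun ρ hρ => ?_
    rw [Finset.sum_Ico_eq_sum_range]
    show _ = (-1 : ℂ) ^ ρ * esymF w ρ * fpoly q (lam - ρ) y z
    rw [fpoly, Finset.mul_sum]
    refine Finset.sum_congr rfl fun j hj => ?_
    have h1 : ρ + j - ρ = j := by omega
    have h2 : lam - (ρ + j) = lam - ρ - j := by omega
    rw [h1, h2, pow_add]
    ring
  rw [key]
  have hTn : ∀ ρ, n ≤ ρ → T ρ = 0 := fun ρ h => by
    show (-1 : ℂ) ^ ρ * esymF w ρ * fpoly q (lam - ρ) y z = 0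
    rw [esymF_eq_zero w (by omega)]; ring
  have hTl : ∀ ρ, lam ≤ ρ → T ρ = 0 := fun ρ h => by
    show (-1 : ℂ) ^ ρ * esymF w ρ * fpoly q (lam - ρ) y z = 0
    rw [Nat.sub_eq_zero_of_le h, fpoly_zero]; ring
  have e1 : ∑ ρ ∈ Finset.range lam, T ρ = ∑ ρ ∈ Finset.range (lam + n), T ρ :=
    Finset.sum_subset (Finset.range_subset_range.2 (by omega))
      (fun ρ hρ hρ' => hTl ρ (by simpa using hρ'))
  have e2 : ∑ ρ ∈ Finset.range n, T ρ = ∑ ρ ∈ Finset.range (lam + n), T ρ :=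
    Finset.sum_subset (Finset.range_subset_range.2 (by omega))
      (fun ρ hρ hρ' => hTn ρ (by simpa using hρ'))
  rw [e1, ← e2]
end
end

section
/- For each λ ≥ 1, the polynomial Σ_{k=1}^n Π_{j=1}^m (x − z_j^{(k)} τ^{2k−n−1}) · f_λ^{((n−1)m)}(x τ^{n+1−2k} | z^{(n)}τ, …, z^{(k+1)}τ, z^{(k−1)}τ^{−1}, …, z^{(1)}τ^{−1}) is divisible by x in the polynomial ring ℂ[x, z_j^{(k)}], and the quotient A_λ^{(m)}(x | z^{(n)}|…|z^{(1)}) is a homogeneous polynomial of total degree m + λ − 1 which is symmetric in the m variables of each group z^{(k)} separately. -/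
noncomputable section

/-- The `k`-th elementary symmetric function of the entries of a list. -/
def esymL {R : Type*} [CommRing R] (l : List R) (k : ℕ) : R :=
  ((l.sublistsLen k).map List.prod).sum

/-- `f_λ^{(N)}(y | z₁,…,z_N)` where the variables are given as a list; the
deformation parameter `τ` and its inverse `τi` are passed separately so that
the definition makes sense over any commutative ring.  By the empty-sum
convention, `f_λ = 0` for `λ = 0`. -/
def fgenL {R : Type*} [CommRing R] (τ τi y : R) (lam : ℕ) (l : List R) : R :=
  ∑ κ ∈ Finset.range lam,
    (-1 : R) ^ κ * ((y * τ) ^ (lam - κ) - (y * τi) ^ (lam - κ)) * esymL l κ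

/-- `τ ^ a` for an integer exponent `a`, negative powers being interpreted
via the inverse `τi` of `τ`. -/
def mixpow {R : Type*} [CommRing R] (τ τi : R) (a : ℤ) : R :=
  if 0 ≤ a then τ ^ a.toNat else τi ^ (-a).toNat

/-- The argument list `z^{(n)}τ, …, z^{(k+1)}τ, z^{(k-1)}τ⁻¹, …, z^{(1)}τ⁻¹`
(the group `z^{(k)}` omitted); the group `z^{(k)}` is `Z (k-1)` (0-based). -/
def argList {R : Type*} [CommRing R] (n m : ℕ) (τ τi : R)
    (Z : Fin n → Fin m → R) (k : Fin n) : List R :=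
  (((List.finRange n).reverse.filter (fun g => k < g)).map
      (fun g => (List.finRange m).map (fun j => Z g j * τ))).flatten
  ++ (((List.finRange n).reverse.filter (fun g => g < k)).map
      (fun g => (List.finRange m).map (fun j => Z g j * τi))).flatten

/-- `x · A_λ^{(m)}(x | z^{(n)} | ⋯ | z^{(1)})`, i.e. the polynomial
`Σ_{k=1}^n Π_{j=1}^m (x - z_j^{(k)} τ^{2k-n-1}) ·
  f_λ^{((n-1)m)}(x τ^{n+1-2k} | z^{(n)}τ, …, z^{(k+1)}τ, z^{(k-1)}τ⁻¹, …, z^{(1)}τ⁻¹)`,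
the group `z^{(k)}` being `Z (k-1)` (0-based). -/
def numerA {R : Type*} [CommRing R] (n m : ℕ) (τ τi : R) (lam : ℕ) (x : R)
    (Z : Fin n → Fin m → R) : R :=
  ∑ k : Fin n,
    (∏ j : Fin m, (x - Z k j * mixpow τ τi (2 * ((k : ℕ) : ℤ) + 1 - (n : ℤ)))) *
      fgenL τ τi (x * mixpow τ τi ((n : ℤ) - (2 * ((k : ℕ) : ℤ) + 1))) lam
        (argList n m τ τi Z k)

/-!
Every summand contains `f_λ` evaluated at a multiple of `x`, and each term of `f_λ(y | …)`
carries the positive power `y ^ (λ - κ)`, so `x` divides the sum. The powers of `τ` are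
constants, so the sum is homogeneous of degree `m + λ`, and a quotient by a variable is
homogeneous of one degree less. Permuting the variables of one group permutes the factors of
the product over that group and the argument lists of the other summands' `f_λ`, which enter
only through their elementary symmetric functions; since `x` is a nonzerodivisor, the
invariance of the sum passes to the quotient.
-/

open MvPolynomial

section

variable {R S : Type*} [CommRing R] [CommRing S]

lemma esymL_eq_esymm (l : List R) (k : ℕ) : esymL l k = Multiset.esymm (l : Multiset R) k := by
  simp [esymL, Multiset.esymm, Multiset.powersetCard_coe, Function.comp_def]

lemma esymL_perm {l l' : List R} (h : l.Perm l') (k : ℕ) : esymL l k = esymL l' k := by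
  rw [esymL_eq_esymm, esymL_eq_esymm, Multiset.coe_eq_coe.2 h]

lemma map_esymL (φ : R →+* S) (l : List R) (k : ℕ) : φ (esymL l k) = esymL (l.map φ) k := by
  rw [esymL_eq_esymm, esymL_eq_esymm, ← Multiset.map_coe, Multiset.esymm, Multiset.esymm,
    Multiset.powersetCard_map, map_multiset_sum]
  simp [map_multiset_prod]

lemma map_fgenL (φ : R →+* S) (τ τi y : R) (lam : ℕ) (l : List R) :
    φ (fgenL τ τi y lam l) = fgenL (φ τ) (φ τi) (φ y) lam (l.map φ) := by
  simp [fgenL, map_esymL]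

lemma fgenL_perm (τ τi y : R) (lam : ℕ) {l l' : List R} (h : l.Perm l') :
    fgenL τ τi y lam l = fgenL τ τi y lam l' := by
  simp only [fgenL, esymL_perm h]

lemma dvd_fgenL_mul (τ τi x d : R) (lam : ℕ) (l : List R) : x ∣ fgenL τ τi (x * d) lam l := by
  refine Finset.dvd_sum fun κ hκ => ?_
  have hexp : lam - κ ≠ 0 := by have := Finset.mem_range.1 hκ; omega
  have hpow (c : R) : x ∣ (x * d * c) ^ (lam - κ) :=
    dvd_pow (by rw [mul_assoc]; exact dvd_mul_right _ _) hexp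
  exact ((dvd_sub (hpow τ) (hpow τi)).mul_left _).mul_right _

lemma map_mixpow (φ : R →+* S) (τ τi : R) (a : ℤ) :
    φ (mixpow τ τi a) = mixpow (φ τ) (φ τi) a := by
  unfold mixpow; split_ifs <;> rw [map_pow]

lemma map_argList (φ : R →+* S) {n m : ℕ} (τ τi : R) (Z : Fin n → Fin m → R) (k : Fin n) :
    (argList n m τ τi Z k).map φ = argList n m (φ τ) (φ τi) (fun g j => φ (Z g j)) k := by
  simp [argList, List.map_flatten, Function.comp_def]

lemma exists_of_mem_argList {n m : ℕ} {τ τi : R} {Z : Fin n → Fin m → R} {k : Fin n} {p : R}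
    (hp : p ∈ argList n m τ τi Z k) : ∃ g j, p = Z g j * τ ∨ p = Z g j * τi := by
  simp only [argList, List.mem_append, List.mem_flatten, List.mem_map] at hp
  rcases hp with ⟨_, ⟨g, -, rfl⟩, hp⟩ | ⟨_, ⟨g, -, rfl⟩, hp⟩ <;>
    obtain ⟨j, -, rfl⟩ := List.mem_map.1 hp
  exacts [⟨g, j, .inl rfl⟩, ⟨g, j, .inr rfl⟩]

lemma argList_comp_perm {n m : ℕ} (τ τi : R) (Z : Fin n → Fin m → R)
    (σ : Fin n → Equiv.Perm (Fin m)) (k : Fin n) :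
    (argList n m τ τi (fun g j => Z g (σ g j)) k).Perm (argList n m τ τi Z k) := by
  have hgroup (c : R) (L : List (Fin n)) :
      (L.map fun g => (List.finRange m).map fun j => Z g (σ g j) * c).flatten.Perm
        (L.map fun g => (List.finRange m).map fun j => Z g j * c).flatten := by
    refine List.Perm.flatten_congr ?_
    rw [List.forall₂_map_left_iff, List.forall₂_map_right_iff, List.forall₂_same]
    exact fun g _ => by
      simpa [List.map_map, Function.comp_def] using (σ g).map_finRange_perm.map (Z g · * c)
  exact (hgroup τ _).append (hgroup τi _)

end

section NumerA

variable {R S : Type*} [CommRing R] [CommRing S] (n m : ℕ) (τ τi : R) (lam : ℕ) (x : R)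
  (Z : Fin n → Fin m → R)

lemma map_numerA (φ : R →+* S) :
    φ (numerA n m τ τi lam x Z)
      = numerA n m (φ τ) (φ τi) lam (φ x) (fun g j => φ (Z g j)) := by
  simp only [numerA, map_sum, map_mul, map_prod, map_sub, map_fgenL, map_mixpow, map_argList]

lemma numerA_comp_perm (σ : Fin n → Equiv.Perm (Fin m)) :
    numerA n m τ τi lam x (fun g j => Z g (σ g j)) = numerA n m τ τi lam x Z := by
  refine Finset.sum_congr rfl fun k _ => ?_
  rw [fgenL_perm _ _ _ _ (argList_comp_perm τ τi Z σ k),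
    Equiv.prod_comp (σ k) fun j => x - Z k j * _]

lemma dvd_numerA : x ∣ numerA n m τ τi lam x Z :=
  Finset.dvd_sum fun _ _ => (dvd_fgenL_mul _ _ _ _ _ _).mul_left _

end NumerA

namespace MvPolynomial.IsHomogeneous

variable {σ R : Type*} [CommRing R]

lemma of_X_mul {i : σ} {p : MvPolynomial σ R} {d : ℕ} (h : (X i * p).IsHomogeneous (d + 1)) :
    p.IsHomogeneous d := by
  intro s hs
  have := h (show coeff (Finsupp.single i 1 + s) (X i * p) ≠ 0 by rwa [coeff_X_mul])
  simp only [map_add, Finsupp.weight_single, Pi.one_apply, smul_eq_mul, mul_one] at this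
  omega

lemma mixpow {τ τi : MvPolynomial σ R} (hτ : τ.IsHomogeneous 0) (hτi : τi.IsHomogeneous 0)
    (a : ℤ) : (mixpow τ τi a).IsHomogeneous 0 := by
  unfold _root_.mixpow
  split_ifs
  exacts [by simpa using hτ.pow _, by simpa using hτi.pow _]

lemma esymL {l : List (MvPolynomial σ R)} (hl : ∀ p ∈ l, p.IsHomogeneous 1) (k : ℕ) :
    (esymL l k).IsHomogeneous k := by
  rw [_root_.esymL, ← mem_homogeneousSubmodule]
  refine list_sum_mem fun p hp => ?_
  obtain ⟨s, hs, rfl⟩ := List.mem_map.1 hp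
  obtain ⟨hsub, rfl⟩ := List.mem_sublistsLen.1 hs
  simpa using SetLike.list_prod_map_mem_graded (A := homogeneousSubmodule σ R) s (fun _ => 1) id
    fun p hp => (mem_homogeneousSubmodule _ _).2 (hl p (hsub.subset hp))

lemma fgenL {τ τi y : MvPolynomial σ R} (hτ : τ.IsHomogeneous 0) (hτi : τi.IsHomogeneous 0)
    (hy : y.IsHomogeneous 1) {l : List (MvPolynomial σ R)} (hl : ∀ p ∈ l, p.IsHomogeneous 1)
    (lam : ℕ) : (fgenL τ τi y lam l).IsHomogeneous lam := by
  refine IsHomogeneous.sum _ _ _ fun κ hκ => ?_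
  have hsign : ((-1 : MvPolynomial σ R) ^ κ).IsHomogeneous 0 := by
    simpa using (isHomogeneous_one σ R).neg.pow κ
  have hdiff := ((hy.mul hτ).pow (lam - κ)).sub ((hy.mul hτi).pow (lam - κ))
  convert (hsign.mul hdiff).mul (esymL hl κ) using 1
  have := Finset.mem_range.1 hκ
  omega

lemma numerA (n m : ℕ) {τ τi x : MvPolynomial σ R} (hτ : τ.IsHomogeneous 0)
    (hτi : τi.IsHomogeneous 0) (hx : x.IsHomogeneous 1) {Z : Fin n → Fin m → MvPolynomial σ R}
    (hZ : ∀ g j, (Z g j).IsHomogeneous 1) (lam : ℕ) :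
    (numerA n m τ τi lam x Z).IsHomogeneous (m + lam) := by
  have hτpow (a : ℤ) := mixpow hτ hτi a
  have hargs (k : Fin n) (p) (hp : p ∈ argList n m τ τi Z k) : p.IsHomogeneous 1 := by
    obtain ⟨g, j, rfl | rfl⟩ := exists_of_mem_argList hp
    exacts [(hZ g j).mul hτ, (hZ g j).mul hτi]
  refine IsHomogeneous.sum _ _ _ fun k _ => IsHomogeneous.mul ?_ ?_
  · simpa using IsHomogeneous.prod Finset.univ _ (fun _ => 1)
      fun j _ => hx.sub ((hZ k j).mul (hτpow (2 * ((k : ℕ) : ℤ) + 1 - n)))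
  · exact fgenL hτ hτi (hx.mul (hτpow _)) (hargs k) lam

end MvPolynomial.IsHomogeneous

/-- The variable `none` is `x` and `some (k, j)` is `z_j^{(k+1)}`. -/
theorem A_polynomial_exists_general (n m : ℕ) (q : ℂ) (lam : ℕ) (hlam : 1 ≤ lam) :
    ∃ A : MvPolynomial (Option (Fin n × Fin m)) ℂ,
      numerA n m (MvPolynomial.C q⁻¹) (MvPolynomial.C q) lam
          (MvPolynomial.X none) (fun k j => MvPolynomial.X (some (k, j)))
        = MvPolynomial.X none * A
      ∧ A.IsHomogeneous (m + lam - 1)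
      ∧ ∀ (k : Fin n) (σ : Equiv.Perm (Fin m)),
          MvPolynomial.rename
            (Option.map (fun p : Fin n × Fin m => if p.1 = k then (p.1, σ p.2) else p)) A
            = A := by
  obtain ⟨A, hA⟩ := dvd_numerA n m (C q⁻¹) (C q) lam (X none)
    fun k j => (X (some (k, j)) : MvPolynomial (Option (Fin n × Fin m)) ℂ)
  refine ⟨A, hA, ?_, fun k σ => ?_⟩
  · refine IsHomogeneous.of_X_mul (i := none) ?_
    rw [Nat.sub_add_cancel (by omega), ← hA]
    exact .numerA n m (isHomogeneous_C _ _) (isHomogeneous_C _ _) (isHomogeneous_X _ _)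
      (fun _ _ => isHomogeneous_X _ _) lam
  · set ρ := rename (R := ℂ) (Option.map fun p : Fin n × Fin m =>
      if p.1 = k then (p.1, σ p.2) else p)
    have hρ := map_numerA n m (C q⁻¹) (C q) lam (X none) (fun k j => X (some (k, j))) ρ.toRingHom
    simp only [AlgHom.toRingHom_eq_coe, RingHom.coe_coe, ρ, rename_C, rename_X, Option.map_none,
      Option.map_some] at hρ
    refine (isRegular_X (n := none)).left ?_
    calc X none * ρ A = ρ (X none * A) := by simp [ρ]
      _ = numerA n m (C q⁻¹) (C q) lam (X none)
            fun g j => X (some (g, (if g = k then σ else 1) j)) := by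
        rw [← hA, hρ]
        congr! 3 with g j
        split_ifs <;> rfl
      _ = X none * A := by rw [numerA_comp_perm n m _ _ lam _ (fun g j => X (some (g, j))), hA]

/-- for `λ ≥ 1` the polynomial
`Σ_{k=1}^n Π_{j=1}^m (x - z_j^{(k)} τ^{2k-n-1}) f_λ^{((n-1)m)}(xτ^{n+1-2k} | …)`
is divisible by `x` in `ℂ[x, z_j^{(k)}]`, and the quotient
`A_λ^{(m)}(x | z^{(n)} | ⋯ | z^{(1)})` is a homogeneous polynomial of total
degree `m + λ - 1`, symmetric in the `m` variables of each group `z^{(k)}`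
separately.  Here the variable `none` is `x` and `some (k, j)` is `z_j^{(k+1)}`. -/
theorem A_polynomial_exists (n m : ℕ) (hn : 2 ≤ n) (hm : 1 ≤ m)
    (q : ℂ) (hq : q ≠ 0) (lam : ℕ) (hlam : 1 ≤ lam) :
    ∃ A : MvPolynomial (Option (Fin n × Fin m)) ℂ,
      numerA n m (MvPolynomial.C q⁻¹) (MvPolynomial.C q) lam
          (MvPolynomial.X none) (fun k j => MvPolynomial.X (some (k, j)))
        = MvPolynomial.X none * A
      ∧ A.IsHomogeneous (m + lam - 1)
      ∧ ∀ (k : Fin n) (σ : Equiv.Perm (Fin m)),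
          MvPolynomial.rename
            (Option.map (fun p : Fin n × Fin m => if p.1 = k then (p.1, σ p.2) else p)) A
            = A :=
  A_polynomial_exists_general n m q lam hlam
end
end

section
/- For m = 1, the polynomial A_λ^{(1)} admits the closed form A_λ^{(1)}(x | z_1,…,z_n) = Σ_{κ=0}^{λ} (−1)^κ x^{λ−κ} (τ^{n(λ−κ)+κ} − τ^{−n(λ−κ)−κ}) σ_κ(z_1,…,z_n); in particular it is fully symmetric in (z_1,…,z_n) and linear in each z_j. -/
noncomputable section

/-- `A_λ^{(m)}(x | z^{(n)} | ⋯ | z^{(1)})` over `ℂ`, with `τ = q⁻¹`. -/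
def Afun (q : ℂ) (n m lam : ℕ) (x : ℂ) (Z : Fin n → Fin m → ℂ) : ℂ :=
  numerA n m q⁻¹ q lam x Z / x

/-- The closed form
`Σ_{κ=0}^{λ} (-1)^κ x^{λ-κ} (τ^{n(λ-κ)+κ} - τ^{-n(λ-κ)-κ}) σ_κ(z₁,…,z_n)`,
with `τ = q⁻¹`. -/
def Acl (q : ℂ) (n lam : ℕ) (x : ℂ) (z : Fin n → ℂ) : ℂ :=
  ∑ κ ∈ Finset.range (lam + 1),
    (-1 : ℂ) ^ κ * x ^ (lam - κ) *
      ((q⁻¹) ^ (n * (lam - κ) + κ) - q ^ (n * (lam - κ) + κ)) * esymF z κ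

lemma zpow_prod_sum {α : Type*} (t : ℂ) (ht : t ≠ 0) (S : Finset α) (e : α → ℤ) :
    (∏ g ∈ S, t ^ e g) = t ^ (∑ g ∈ S, e g) := by
  classical
  induction S using Finset.cons_induction with
  | empty => simp
  | cons a s ha ih => rw [Finset.prod_cons, Finset.sum_cons, ih, zpow_add₀ ht]

lemma zpow_pow_nat (t : ℂ) (ht : t ≠ 0) (a : ℤ) (μ : ℕ) :
    (t ^ a) ^ μ = t ^ (a * μ) := by
  induction μ with
  | zero => simp
  | succ m ih => rw [pow_succ, ih, ← zpow_add₀ ht]; congr 1; push_cast; ring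

lemma mixpow_eq (q : ℂ) (a : ℤ) : mixpow q⁻¹ q a = q⁻¹ ^ a := by
  unfold mixpow
  split_ifs with h
  · rw [← zpow_natCast, Int.toNat_of_nonneg h]
  · rw [← zpow_natCast, Int.toNat_of_nonneg (by omega), inv_zpow, ← zpow_neg]

lemma esymL_map {α : Type*} [DecidableEq α] (L : List α) (hL : L.Nodup) (F : α → ℂ) (κ : ℕ) :
    esymL (L.map F) κ = ∑ S ∈ L.toFinset.powersetCard κ, ∏ g ∈ S, F g := by
  have h1 : esymL (L.map F) κ = Multiset.esymm (↑(L.map F) : Multiset ℂ) κ := by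
    simp [esymL, Multiset.esymm, Multiset.powersetCard_coe, Multiset.map_coe, List.map_map,
      Function.comp_def, Multiset.sum_coe]
  rw [h1]
  have h2 : (↑(L.map F) : Multiset ℂ) = L.toFinset.val.map F := by
    rw [← Multiset.map_coe, List.toFinset_val, hL.dedup]
  rw [h2, Finset.esymm_map_val]
def Lk (n : ℕ) (k : Fin n) : List (Fin n) :=
  ((List.finRange n).reverse.filter (fun g => k < g))
    ++ ((List.finRange n).reverse.filter (fun g => g < k))

lemma flatten_singleton {α β : Type*} (L : List α) (f : α → β) :
    (L.map (fun a => [f a])).flatten = L.map f := by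
  induction L with
  | nil => rfl
  | cons a l ih => simp [ih]

lemma argList_eq {n : ℕ} (τ τi : ℂ) (Z : Fin n → Fin 1 → ℂ) (k : Fin n) :
    argList n 1 τ τi Z k = (Lk n k).map (fun g => Z g 0 * (if k < g then τ else τi)) := by
  unfold argList Lk
  rw [List.map_append]
  congr 1
  · rw [show (List.finRange 1) = [0] from rfl]
    simp only [List.map_cons, List.map_nil]
    rw [flatten_singleton]
    apply List.map_congr_left
    intro g hg
    rw [List.mem_filter] at hg
    rw [if_pos (by exact_mod_cast of_decide_eq_true hg.2)]
  · rw [show (List.finRange 1) = [0] from rfl]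
    simp only [List.map_cons, List.map_nil]
    rw [flatten_singleton]
    apply List.map_congr_left
    intro g hg
    rw [List.mem_filter] at hg
    have h2 : g < k := of_decide_eq_true hg.2
    rw [if_neg (by exact fun h => absurd h (not_lt_of_gt h2))]

lemma Lk_nodup (n : ℕ) (k : Fin n) : (Lk n k).Nodup := by
  apply List.Nodup.append
  · exact List.Nodup.filter _ (List.nodup_reverse.mpr (List.nodup_finRange n))
  · exact List.Nodup.filter _ (List.nodup_reverse.mpr (List.nodup_finRange n))
  · intro a ha hb
    rw [List.mem_filter] at ha hb
    have h1 : k < a := of_decide_eq_true ha.2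
    have h2 : a < k := of_decide_eq_true hb.2
    exact absurd h1 (not_lt_of_gt h2)

lemma Lk_toFinset (n : ℕ) (k : Fin n) :
    (Lk n k).toFinset = (Finset.univ : Finset (Fin n)).erase k := by
  ext g
  simp only [Lk, List.toFinset_append, Finset.mem_union, List.mem_toFinset, List.mem_filter,
    List.mem_reverse, List.mem_finRange, true_and, Finset.mem_erase, Finset.mem_univ, and_true,
    decide_eq_true_eq]
  constructor
  · rintro (h | h)
    · exact (ne_of_gt h)
    · exact ne_of_lt h
  · intro h
    rcases lt_or_gt_of_ne h with h1 | h1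
    · right; exact h1
    · left; exact h1

def dd {n : ℕ} (k : Fin n) (S : Finset (Fin n)) : ℤ :=
  ∑ g ∈ S, (if k < g then (1 : ℤ) else -1)

def cc {n : ℕ} (T : Finset (Fin n)) (j : ℕ) : ℤ :=
  (T.card : ℤ) - 2 * ((T.filter (fun (g : Fin n) => (g : ℕ) < j)).card : ℤ)

lemma dd_of_notMem {n : ℕ} {k : Fin n} {T : Finset (Fin n)} (hk : k ∉ T) :
    dd k T = cc T (k : ℕ) := by
  unfold dd cc
  rw [Finset.sum_ite, Finset.sum_const, Finset.sum_const]
  have hfilt : T.filter (fun g => ¬ k < g) = T.filter (fun (g : Fin n) => (g : ℕ) < (k : ℕ)) := by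
    apply Finset.filter_congr
    intro g hg
    have : g ≠ k := fun h => hk (h ▸ hg)
    simp only [not_lt, Fin.lt_def, Fin.le_def, eq_iff_iff]
    have := Fin.val_ne_of_ne this
    omega
  have hcard : (T.filter (fun g => k < g)).card + (T.filter (fun g => ¬ k < g)).card = T.card :=
    Finset.card_filter_add_card_filter_not _
  rw [hfilt] at hcard
  rw [hfilt]
  simp only [nsmul_eq_mul, mul_one, mul_neg]
  push_cast
  omega

lemma dd_erase {n : ℕ} {k : Fin n} {T : Finset (Fin n)} (hk : k ∈ T) :
    dd k (T.erase k) = cc T (k : ℕ) - 1 := by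
  rw [dd_of_notMem (Finset.notMem_erase k T)]
  unfold cc
  have h1 : (T.erase k).card = T.card - 1 := Finset.card_erase_of_mem hk
  have h2 : (T.erase k).filter (fun (g : Fin n) => (g : ℕ) < (k : ℕ))
      = T.filter (fun (g : Fin n) => (g : ℕ) < (k : ℕ)) := by
    rw [Finset.filter_erase]
    exact Finset.erase_eq_of_notMem (by simp)
  rw [h1, h2]
  have : 1 ≤ T.card := Finset.card_pos.mpr ⟨k, hk⟩
  push_cast
  omega

lemma cc_succ {n : ℕ} (T : Finset (Fin n)) (k : Fin n) :
    cc T ((k : ℕ) + 1) = cc T (k : ℕ) - (if k ∈ T then 2 else 0) := by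
  unfold cc
  have hsplit : T.filter (fun (g : Fin n) => (g : ℕ) < (k : ℕ) + 1)
      = T.filter (fun (g : Fin n) => (g : ℕ) < (k : ℕ)) ∪ T.filter (fun g => g = k) := by
    rw [← Finset.filter_or]
    apply Finset.filter_congr
    intro g hg
    simp only [eq_iff_iff, Fin.ext_iff]
    omega
  have hdisj : Disjoint (T.filter (fun (g : Fin n) => (g : ℕ) < (k : ℕ))) (T.filter (fun g => g = k)) := by
    rw [Finset.disjoint_left]
    intro g hg1 hg2
    rw [Finset.mem_filter] at hg1 hg2
    rw [hg2.2] at hg1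
    omega
  have hk2 : T.filter (fun g => g = k) = if k ∈ T then {k} else ∅ := by
    split_ifs with h
    · ext g; simp only [Finset.mem_filter, Finset.mem_singleton]
      exact ⟨fun hx => hx.2, fun hx => ⟨hx ▸ h, hx⟩⟩
    · ext g; simp only [Finset.mem_filter, Finset.notMem_empty, iff_false, not_and]
      exact fun hg he => h (he ▸ hg)
  rw [hsplit, Finset.card_union_of_disjoint hdisj, hk2]
  split_ifs with h <;> simp <;> push_cast <;> ring

lemma cc_zero {n : ℕ} (T : Finset (Fin n)) : cc T 0 = T.card := by
  unfold cc
  rw [Finset.filter_false_of_mem (fun g _ => by omega)]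
  simp

lemma cc_top {n : ℕ} (T : Finset (Fin n)) : cc T n = -T.card := by
  unfold cc
  rw [Finset.filter_true_of_mem (fun g _ => g.isLt)]
  ring

def GG (t : ℂ) {n : ℕ} (T : Finset (Fin n)) (μ : ℕ) (j : ℕ) : ℂ :=
  t ^ (((n : ℤ) - 2 * j) * μ + cc T j)

lemma key_telescope (t : ℂ) (ht : t ≠ 0) (n : ℕ) (T : Finset (Fin n)) (μ : ℕ) :
    (∑ k : Fin n, (if k ∈ T
      then t ^ (((n : ℤ) - 2 * (k : ℕ)) * μ + 1 + dd k (T.erase k))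
            - t ^ (((n : ℤ) - 2 * (k : ℕ) - 2) * μ - 1 + dd k (T.erase k))
      else t ^ (((n : ℤ) - 2 * (k : ℕ)) * μ + dd k T)
            - t ^ (((n : ℤ) - 2 * (k : ℕ) - 2) * μ + dd k T)))
    = t ^ ((n : ℤ) * μ + T.card) - t ^ (-(n : ℤ) * μ - T.card) := by
  have hterm : ∀ k : Fin n, (if k ∈ T
      then t ^ (((n : ℤ) - 2 * (k : ℕ)) * μ + 1 + dd k (T.erase k))
            - t ^ (((n : ℤ) - 2 * (k : ℕ) - 2) * μ - 1 + dd k (T.erase k))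
      else t ^ (((n : ℤ) - 2 * (k : ℕ)) * μ + dd k T)
            - t ^ (((n : ℤ) - 2 * (k : ℕ) - 2) * μ + dd k T))
      = GG t T μ (k : ℕ) - GG t T μ ((k : ℕ) + 1) := by
    intro k
    unfold GG
    by_cases hk : k ∈ T
    · rw [if_pos hk, dd_erase hk, cc_succ T k, if_pos hk]
      congr 2 <;> push_cast <;> ring
    · rw [if_neg hk, dd_of_notMem hk, cc_succ T k, if_neg hk]
      congr 2 <;> push_cast <;> ring
  rw [Finset.sum_congr rfl (fun k _ => hterm k)]
  rw [Fin.sum_univ_eq_sum_range (fun j => GG t T μ j - GG t T μ (j + 1)) n]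
  rw [Finset.sum_range_sub' (fun j : ℕ => GG t T μ j) n]
  unfold GG
  rw [cc_zero, cc_top]
  congr 2 <;> push_cast <;> ring

lemma reindexA {n : ℕ} (κ : ℕ) (f : Fin n → Finset (Fin n) → ℂ) :
    (∑ k : Fin n, ∑ S ∈ (Finset.univ.erase k).powersetCard κ, f k S)
    = ∑ S ∈ (Finset.univ : Finset (Fin n)).powersetCard κ, ∑ k ∈ Sᶜ, f k S := by
  have h1 : ∀ k : Fin n, (Finset.univ.erase k).powersetCard κ
      = ((Finset.univ : Finset (Fin n)).powersetCard κ).filter (fun S => k ∉ S) := by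
    intro k
    ext S
    simp only [Finset.mem_powersetCard, Finset.mem_filter, Finset.subset_erase,
      Finset.subset_univ, true_and]
    tauto
  simp_rw [h1, Finset.sum_filter]
  rw [Finset.sum_comm]
  apply Finset.sum_congr rfl
  intro S _
  rw [← Finset.sum_filter]
  congr 1
  ext k
  simp [Finset.mem_compl]

lemma reindexB {n : ℕ} (κ : ℕ) (f : Fin n → Finset (Fin n) → ℂ) :
    (∑ k : Fin n, ∑ S ∈ (Finset.univ.erase k).powersetCard κ, f k S)
    = ∑ T ∈ (Finset.univ : Finset (Fin n)).powersetCard (κ + 1), ∑ k ∈ T, f k (T.erase k) := by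
  have h1 : ∀ k : Fin n, (∑ S ∈ (Finset.univ.erase k).powersetCard κ, f k S)
      = ∑ T ∈ ((Finset.univ : Finset (Fin n)).powersetCard (κ + 1)).filter (fun T => k ∈ T),
          f k (T.erase k) := by
    intro k
    apply Finset.sum_nbij' (fun S => insert k S) (fun T => T.erase k)
    · intro S hS
      rw [Finset.mem_powersetCard] at hS
      rw [Finset.mem_filter, Finset.mem_powersetCard]
      have hk : k ∉ S := fun h => (Finset.mem_erase.mp (hS.1 h)).1 rfl
      exact ⟨⟨Finset.subset_univ _, by rw [Finset.card_insert_of_notMem hk, hS.2]⟩,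
        Finset.mem_insert_self k S⟩
    · intro T hT
      rw [Finset.mem_filter, Finset.mem_powersetCard] at hT
      rw [Finset.mem_powersetCard]
      constructor
      · intro g hg
        rw [Finset.mem_erase] at hg
        exact Finset.mem_erase.mpr ⟨hg.1, Finset.mem_univ g⟩
      · rw [Finset.card_erase_of_mem hT.2, hT.1.2]; omega
    · intro S hS
      rw [Finset.mem_powersetCard] at hS
      have hk : k ∉ S := fun h => (Finset.mem_erase.mp (hS.1 h)).1 rfl
      exact Finset.erase_insert hk
    · intro T hT
      rw [Finset.mem_filter] at hT
      exact Finset.insert_erase hT.2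
    · intro S hS
      rw [Finset.mem_powersetCard] at hS
      have hk : k ∉ S := fun h => (Finset.mem_erase.mp (hS.1 h)).1 rfl
      rw [Finset.erase_insert hk]
  simp_rw [h1, Finset.sum_filter]
  rw [Finset.sum_comm]
  apply Finset.sum_congr rfl
  intro T _
  rw [← Finset.sum_filter, Finset.filter_mem_eq_inter, Finset.univ_inter]
lemma esymF_eq_multiset {N : ℕ} (z : Fin N → ℂ) (k : ℕ) :
    esymF z k = (Finset.univ.val.map z).esymm k := by
  rw [Finset.esymm_map_val]
  rfl

lemma esymF_comp_equiv {N : ℕ} (z : Fin N → ℂ) (e : Fin N ≃ Fin N) (k : ℕ) :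
    esymF (z ∘ e) k = esymF z k := by
  rw [esymF_eq_multiset, esymF_eq_multiset]
  congr 1
  have : (Finset.univ.val.map (⇑e) : Multiset (Fin N)) = Finset.univ.val := by
    have h := Finset.map_univ_equiv e
    calc Finset.univ.val.map (⇑e) = (Finset.univ.map e.toEmbedding).val := rfl
      _ = Finset.univ.val := by rw [h]
  calc Finset.univ.val.map (z ∘ ⇑e) = (Finset.univ.val.map (⇑e)).map z := by
        rw [Multiset.map_map]
    _ = Finset.univ.val.map z := by rw [this]

lemma esymF_update {N : ℕ} (z : Fin N → ℂ) (j : Fin N) (k : ℕ) (t : ℂ) :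
    esymF (Function.update z j t) k
      = (∑ S ∈ (Finset.univ.erase j).powersetCard k, ∏ i ∈ S, z i)
        + (∑ S ∈ ((Finset.univ : Finset (Fin N)).powersetCard k).filter (fun S => j ∈ S),
            ∏ i ∈ S.erase j, z i) * t := by
  unfold esymF
  rw [← Finset.sum_filter_add_sum_filter_not (Finset.powersetCard k Finset.univ)
    (fun S => j ∈ S)]
  rw [add_comm, Finset.sum_mul]
  congr 1
  · -- j ∉ S part
    have h1 : ((Finset.univ : Finset (Fin N)).powersetCard k).filter (fun S => j ∉ S)
        = (Finset.univ.erase j).powersetCard k := by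
      ext S
      simp only [Finset.mem_powersetCard, Finset.mem_filter, Finset.subset_erase,
        Finset.subset_univ, true_and]
      tauto
    rw [h1]
    apply Finset.sum_congr rfl
    intro S hS
    rw [Finset.mem_powersetCard, Finset.subset_erase] at hS
    apply Finset.prod_congr rfl
    intro i hi
    have : i ≠ j := fun h => hS.1.2 (h ▸ hi)
    exact Function.update_of_ne this t z
  · apply Finset.sum_congr rfl
    intro S hS
    rw [Finset.mem_filter] at hS
    rw [Finset.prod_update_of_mem hS.2, mul_comm]
    congr 1
    rw [← Finset.erase_eq]

lemma zpe (t : ℂ) {a b : ℤ} (h : a = b) : t ^ a = t ^ b := by rw [h]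

lemma step1 (n : ℕ) (q : ℂ) (hq : q ≠ 0) (lam : ℕ) (x : ℂ) (w : Fin n → ℂ) :
    numerA n 1 q⁻¹ q lam x (fun k _ => w k)
    = ∑ k : Fin n, ∑ κ ∈ Finset.range lam,
        (-1 : ℂ) ^ κ * x ^ (lam - κ) * (x - w k * q⁻¹ ^ (2 * ((k : ℕ) : ℤ) + 1 - (n : ℤ)))
        * (q⁻¹ ^ (((n : ℤ) - 2 * (k : ℕ)) * ((lam - κ : ℕ) : ℤ))
            - q⁻¹ ^ (((n : ℤ) - 2 * (k : ℕ) - 2) * ((lam - κ : ℕ) : ℤ)))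
        * ∑ S ∈ (Finset.univ.erase k).powersetCard κ, (∏ g ∈ S, w g) * q⁻¹ ^ (dd k S) := by
  have ht : (q⁻¹ : ℂ) ≠ 0 := inv_ne_zero hq
  unfold numerA fgenL
  apply Finset.sum_congr rfl
  intro k _
  rw [Fin.prod_univ_one, mixpow_eq, mixpow_eq]
  rw [argList_eq q⁻¹ q _ k]
  rw [Finset.mul_sum]
  apply Finset.sum_congr rfl
  intro κ _
  rw [esymL_map (Lk n k) (Lk_nodup n k), Lk_toFinset]
  have hsy : (∑ S ∈ (Finset.univ.erase k).powersetCard κ,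
        ∏ g ∈ S, w g * (if k < g then q⁻¹ else q))
      = ∑ S ∈ (Finset.univ.erase k).powersetCard κ, (∏ g ∈ S, w g) * q⁻¹ ^ (dd k S) := by
    apply Finset.sum_congr rfl
    intro S _
    rw [Finset.prod_mul_distrib]
    congr 1
    rw [show (∏ g ∈ S, (if k < g then q⁻¹ else q))
        = ∏ g ∈ S, q⁻¹ ^ (if k < g then (1 : ℤ) else -1) from
      Finset.prod_congr rfl (fun g _ => by split_ifs <;> simp [zpow_neg])]
    rw [zpow_prod_sum q⁻¹ ht S]
    rfl
  have hbr : (x * q⁻¹ ^ ((n : ℤ) - (2 * ((k : ℕ) : ℤ) + 1)) * q⁻¹) ^ (lam - κ)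
        - (x * q⁻¹ ^ ((n : ℤ) - (2 * ((k : ℕ) : ℤ) + 1)) * q) ^ (lam - κ)
      = x ^ (lam - κ) * (q⁻¹ ^ (((n : ℤ) - 2 * (k : ℕ)) * ((lam - κ : ℕ) : ℤ))
          - q⁻¹ ^ (((n : ℤ) - 2 * (k : ℕ) - 2) * ((lam - κ : ℕ) : ℤ))) := by
    have e1 : x * q⁻¹ ^ ((n : ℤ) - (2 * ((k : ℕ) : ℤ) + 1)) * q⁻¹
        = x * q⁻¹ ^ ((n : ℤ) - 2 * (k : ℕ)) := by
      rw [mul_assoc, ← zpow_add_one₀ ht]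
      congr 1
      ring
    have e2 : x * q⁻¹ ^ ((n : ℤ) - (2 * ((k : ℕ) : ℤ) + 1)) * q
        = x * q⁻¹ ^ ((n : ℤ) - 2 * (k : ℕ) - 2) := by
      rw [mul_assoc]
      congr 1
      rw [show ((n : ℤ) - 2 * ((k : ℕ) : ℤ) - 2) = ((n : ℤ) - (2 * ((k : ℕ) : ℤ) + 1)) + (-1)
        from by ring, zpow_add₀ ht]
      congr 1
      simp
    rw [e1, e2, mul_pow, mul_pow, zpow_pow_nat q⁻¹ ht, zpow_pow_nat q⁻¹ ht, mul_sub]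
  rw [hsy, hbr]
  ring

lemma step2 (n : ℕ) (q : ℂ) (hq : q ≠ 0) (lam : ℕ) (x : ℂ) (w : Fin n → ℂ) :
    (∑ k : Fin n, ∑ κ ∈ Finset.range lam,
        (-1 : ℂ) ^ κ * x ^ (lam - κ) * (x - w k * q⁻¹ ^ (2 * ((k : ℕ) : ℤ) + 1 - (n : ℤ)))
        * (q⁻¹ ^ (((n : ℤ) - 2 * (k : ℕ)) * ((lam - κ : ℕ) : ℤ))
            - q⁻¹ ^ (((n : ℤ) - 2 * (k : ℕ) - 2) * ((lam - κ : ℕ) : ℤ)))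
        * ∑ S ∈ (Finset.univ.erase k).powersetCard κ, (∏ g ∈ S, w g) * q⁻¹ ^ (dd k S))
    = (∑ κ ∈ Finset.range lam, (-1 : ℂ) ^ κ * x ^ (lam - κ + 1)
        * ∑ k : Fin n, ∑ S ∈ (Finset.univ.erase k).powersetCard κ, (∏ g ∈ S, w g)
          * (q⁻¹ ^ (((n : ℤ) - 2 * (k : ℕ)) * ((lam - κ : ℕ) : ℤ) + dd k S)
            - q⁻¹ ^ (((n : ℤ) - 2 * (k : ℕ) - 2) * ((lam - κ : ℕ) : ℤ) + dd k S)))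
    - (∑ κ ∈ Finset.range lam, (-1 : ℂ) ^ κ * x ^ (lam - κ)
        * ∑ k : Fin n, ∑ S ∈ (Finset.univ.erase k).powersetCard κ, (w k * ∏ g ∈ S, w g)
          * (q⁻¹ ^ (((n : ℤ) - 2 * (k : ℕ)) * ((lam - κ : ℕ) : ℤ)
                + (2 * ((k : ℕ) : ℤ) + 1 - (n : ℤ)) + dd k S)
            - q⁻¹ ^ (((n : ℤ) - 2 * (k : ℕ) - 2) * ((lam - κ : ℕ) : ℤ)
                + (2 * ((k : ℕ) : ℤ) + 1 - (n : ℤ)) + dd k S))) := by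
  have ht : (q⁻¹ : ℂ) ≠ 0 := inv_ne_zero hq
  rw [Finset.sum_comm]
  rw [← Finset.sum_sub_distrib]
  apply Finset.sum_congr rfl
  intro κ _
  simp only [Finset.mul_sum, ← Finset.sum_sub_distrib]
  apply Finset.sum_congr rfl
  intro k _
  apply Finset.sum_congr rfl
  intro S _
  simp only [zpow_add₀ ht, pow_succ]
  ring

lemma step3a (n : ℕ) (q : ℂ) (hq : q ≠ 0) (lam : ℕ) (x : ℂ) (w : Fin n → ℂ) :
    (∑ κ ∈ Finset.range lam, (-1 : ℂ) ^ κ * x ^ (lam - κ + 1)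
        * ∑ k : Fin n, ∑ S ∈ (Finset.univ.erase k).powersetCard κ, (∏ g ∈ S, w g)
          * (q⁻¹ ^ (((n : ℤ) - 2 * (k : ℕ)) * ((lam - κ : ℕ) : ℤ) + dd k S)
            - q⁻¹ ^ (((n : ℤ) - 2 * (k : ℕ) - 2) * ((lam - κ : ℕ) : ℤ) + dd k S)))
    = ∑ κ ∈ Finset.range (lam + 1), (-1 : ℂ) ^ κ * x ^ (lam - κ + 1)
        * ∑ T ∈ (Finset.univ : Finset (Fin n)).powersetCard κ, (∏ g ∈ T, w g)
          * ∑ k ∈ Tᶜ,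
            (q⁻¹ ^ (((n : ℤ) - 2 * (k : ℕ)) * ((lam - κ : ℕ) : ℤ) + dd k T)
              - q⁻¹ ^ (((n : ℤ) - 2 * (k : ℕ) - 2) * ((lam - κ : ℕ) : ℤ) + dd k T)) := by
  rw [Finset.sum_range_succ]
  have hzero : ((-1 : ℂ) ^ lam * x ^ (lam - lam + 1)
      * ∑ T ∈ (Finset.univ : Finset (Fin n)).powersetCard lam, (∏ g ∈ T, w g)
        * ∑ k ∈ Tᶜ,
          (q⁻¹ ^ (((n : ℤ) - 2 * (k : ℕ)) * ((lam - lam : ℕ) : ℤ) + dd k T)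
            - q⁻¹ ^ (((n : ℤ) - 2 * (k : ℕ) - 2) * ((lam - lam : ℕ) : ℤ) + dd k T))) = 0 := by
    simp [Nat.sub_self]
  rw [hzero, add_zero]
  apply Finset.sum_congr rfl
  intro κ _
  congr 1
  rw [reindexA κ (fun k S => (∏ g ∈ S, w g)
    * (q⁻¹ ^ (((n : ℤ) - 2 * (k : ℕ)) * ((lam - κ : ℕ) : ℤ) + dd k S)
      - q⁻¹ ^ (((n : ℤ) - 2 * (k : ℕ) - 2) * ((lam - κ : ℕ) : ℤ) + dd k S)))]
  apply Finset.sum_congr rfl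
  intro T _
  rw [Finset.mul_sum]

lemma step3b (n : ℕ) (q : ℂ) (hq : q ≠ 0) (lam : ℕ) (x : ℂ) (w : Fin n → ℂ) :
    (∑ κ ∈ Finset.range lam, (-1 : ℂ) ^ κ * x ^ (lam - κ)
        * ∑ k : Fin n, ∑ S ∈ (Finset.univ.erase k).powersetCard κ, (w k * ∏ g ∈ S, w g)
          * (q⁻¹ ^ (((n : ℤ) - 2 * (k : ℕ)) * ((lam - κ : ℕ) : ℤ)
                + (2 * ((k : ℕ) : ℤ) + 1 - (n : ℤ)) + dd k S)
            - q⁻¹ ^ (((n : ℤ) - 2 * (k : ℕ) - 2) * ((lam - κ : ℕ) : ℤ)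
                + (2 * ((k : ℕ) : ℤ) + 1 - (n : ℤ)) + dd k S)))
    = - ∑ κ ∈ Finset.range (lam + 1), (-1 : ℂ) ^ κ * x ^ (lam - κ + 1)
        * ∑ T ∈ (Finset.univ : Finset (Fin n)).powersetCard κ, (∏ g ∈ T, w g)
          * ∑ k ∈ T,
            (q⁻¹ ^ (((n : ℤ) - 2 * (k : ℕ)) * ((lam - κ : ℕ) : ℤ) + 1 + dd k (T.erase k))
              - q⁻¹ ^ (((n : ℤ) - 2 * (k : ℕ) - 2) * ((lam - κ : ℕ) : ℤ) - 1
                  + dd k (T.erase k))) := by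
  rw [Finset.sum_range_succ']
  have hzero : ((-1 : ℂ) ^ 0 * x ^ (lam - 0 + 1)
      * ∑ T ∈ (Finset.univ : Finset (Fin n)).powersetCard 0, (∏ g ∈ T, w g)
        * ∑ k ∈ T,
          (q⁻¹ ^ (((n : ℤ) - 2 * (k : ℕ)) * ((lam - 0 : ℕ) : ℤ) + 1 + dd k (T.erase k))
            - q⁻¹ ^ (((n : ℤ) - 2 * (k : ℕ) - 2) * ((lam - 0 : ℕ) : ℤ) - 1
                + dd k (T.erase k)))) = 0 := by
    rw [Finset.powersetCard_zero]
    simp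
  rw [hzero, add_zero, ← Finset.sum_neg_distrib]
  apply Finset.sum_congr rfl
  intro κ hκ
  rw [Finset.mem_range] at hκ
  have hc : ((lam - κ : ℕ) : ℤ) = ((lam - (κ + 1) : ℕ) : ℤ) + 1 := by omega
  rw [reindexB κ (fun k S => (w k * ∏ g ∈ S, w g)
    * (q⁻¹ ^ (((n : ℤ) - 2 * (k : ℕ)) * ((lam - κ : ℕ) : ℤ)
          + (2 * ((k : ℕ) : ℤ) + 1 - (n : ℤ)) + dd k S)
      - q⁻¹ ^ (((n : ℤ) - 2 * (k : ℕ) - 2) * ((lam - κ : ℕ) : ℤ)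
          + (2 * ((k : ℕ) : ℤ) + 1 - (n : ℤ)) + dd k S)))]
  conv_rhs => rw [show lam - (κ + 1) + 1 = lam - κ from by omega]
  have hinner : (∑ T ∈ (Finset.univ : Finset (Fin n)).powersetCard (κ + 1),
        ∑ k ∈ T, (w k * ∏ g ∈ T.erase k, w g)
          * (q⁻¹ ^ (((n : ℤ) - 2 * (k : ℕ)) * ((lam - κ : ℕ) : ℤ)
                + (2 * ((k : ℕ) : ℤ) + 1 - (n : ℤ)) + dd k (T.erase k))
            - q⁻¹ ^ (((n : ℤ) - 2 * (k : ℕ) - 2) * ((lam - κ : ℕ) : ℤ)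
                + (2 * ((k : ℕ) : ℤ) + 1 - (n : ℤ)) + dd k (T.erase k))))
      = ∑ T ∈ (Finset.univ : Finset (Fin n)).powersetCard (κ + 1), (∏ g ∈ T, w g)
          * ∑ k ∈ T,
            (q⁻¹ ^ (((n : ℤ) - 2 * (k : ℕ)) * ((lam - (κ + 1) : ℕ) : ℤ) + 1
                + dd k (T.erase k))
              - q⁻¹ ^ (((n : ℤ) - 2 * (k : ℕ) - 2) * ((lam - (κ + 1) : ℕ) : ℤ) - 1
                + dd k (T.erase k))) := by
    apply Finset.sum_congr rfl
    intro T _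
    rw [Finset.mul_sum]
    apply Finset.sum_congr rfl
    intro k hk
    rw [Finset.mul_prod_erase T w hk]
    congr 1
    congr 1
    · exact zpe q⁻¹ (by rw [hc]; ring)
    · exact zpe q⁻¹ (by rw [hc]; ring)
  rw [hinner, pow_succ]
  ring

lemma step4 (n : ℕ) (q : ℂ) (hq : q ≠ 0) (lam : ℕ) (x : ℂ) (w : Fin n → ℂ) :
    ((∑ κ ∈ Finset.range (lam + 1), (-1 : ℂ) ^ κ * x ^ (lam - κ + 1)
        * ∑ T ∈ (Finset.univ : Finset (Fin n)).powersetCard κ, (∏ g ∈ T, w g)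
          * ∑ k ∈ Tᶜ,
            (q⁻¹ ^ (((n : ℤ) - 2 * (k : ℕ)) * ((lam - κ : ℕ) : ℤ) + dd k T)
              - q⁻¹ ^ (((n : ℤ) - 2 * (k : ℕ) - 2) * ((lam - κ : ℕ) : ℤ) + dd k T)))
      + ∑ κ ∈ Finset.range (lam + 1), (-1 : ℂ) ^ κ * x ^ (lam - κ + 1)
        * ∑ T ∈ (Finset.univ : Finset (Fin n)).powersetCard κ, (∏ g ∈ T, w g)
          * ∑ k ∈ T,
            (q⁻¹ ^ (((n : ℤ) - 2 * (k : ℕ)) * ((lam - κ : ℕ) : ℤ) + 1 + dd k (T.erase k))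
              - q⁻¹ ^ (((n : ℤ) - 2 * (k : ℕ) - 2) * ((lam - κ : ℕ) : ℤ) - 1
                  + dd k (T.erase k))))
    = ∑ κ ∈ Finset.range (lam + 1), (-1 : ℂ) ^ κ * x ^ (lam - κ + 1)
        * (q⁻¹ ^ ((n : ℤ) * ((lam - κ : ℕ) : ℤ) + (κ : ℤ))
            - q⁻¹ ^ (-(n : ℤ) * ((lam - κ : ℕ) : ℤ) - (κ : ℤ)))
        * ∑ T ∈ (Finset.univ : Finset (Fin n)).powersetCard κ, ∏ g ∈ T, w g := by
  have ht : (q⁻¹ : ℂ) ≠ 0 := inv_ne_zero hq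
  rw [← Finset.sum_add_distrib]
  apply Finset.sum_congr rfl
  intro κ _
  rw [← mul_add, ← Finset.sum_add_distrib]
  have hT : ∀ T ∈ (Finset.univ : Finset (Fin n)).powersetCard κ,
      ((∏ g ∈ T, w g)
          * ∑ k ∈ Tᶜ,
            (q⁻¹ ^ (((n : ℤ) - 2 * (k : ℕ)) * ((lam - κ : ℕ) : ℤ) + dd k T)
              - q⁻¹ ^ (((n : ℤ) - 2 * (k : ℕ) - 2) * ((lam - κ : ℕ) : ℤ) + dd k T))
        + (∏ g ∈ T, w g)
          * ∑ k ∈ T,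
            (q⁻¹ ^ (((n : ℤ) - 2 * (k : ℕ)) * ((lam - κ : ℕ) : ℤ) + 1 + dd k (T.erase k))
              - q⁻¹ ^ (((n : ℤ) - 2 * (k : ℕ) - 2) * ((lam - κ : ℕ) : ℤ) - 1
                  + dd k (T.erase k))))
      = (∏ g ∈ T, w g) * (q⁻¹ ^ ((n : ℤ) * ((lam - κ : ℕ) : ℤ) + (κ : ℤ))
          - q⁻¹ ^ (-(n : ℤ) * ((lam - κ : ℕ) : ℤ) - (κ : ℤ))) := by
    intro T hTmem
    have hcard : T.card = κ := (Finset.mem_powersetCard_univ.mp hTmem)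
    rw [← mul_add]
    congr 1
    have hsplit : (∑ k : Fin n, (if k ∈ T
        then q⁻¹ ^ (((n : ℤ) - 2 * (k : ℕ)) * ((lam - κ : ℕ) : ℤ) + 1 + dd k (T.erase k))
              - q⁻¹ ^ (((n : ℤ) - 2 * (k : ℕ) - 2) * ((lam - κ : ℕ) : ℤ) - 1
                  + dd k (T.erase k))
        else q⁻¹ ^ (((n : ℤ) - 2 * (k : ℕ)) * ((lam - κ : ℕ) : ℤ) + dd k T)
              - q⁻¹ ^ (((n : ℤ) - 2 * (k : ℕ) - 2) * ((lam - κ : ℕ) : ℤ) + dd k T)))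
        = (∑ k ∈ Tᶜ,
            (q⁻¹ ^ (((n : ℤ) - 2 * (k : ℕ)) * ((lam - κ : ℕ) : ℤ) + dd k T)
              - q⁻¹ ^ (((n : ℤ) - 2 * (k : ℕ) - 2) * ((lam - κ : ℕ) : ℤ) + dd k T)))
          + ∑ k ∈ T,
            (q⁻¹ ^ (((n : ℤ) - 2 * (k : ℕ)) * ((lam - κ : ℕ) : ℤ) + 1 + dd k (T.erase k))
              - q⁻¹ ^ (((n : ℤ) - 2 * (k : ℕ) - 2) * ((lam - κ : ℕ) : ℤ) - 1
                  + dd k (T.erase k))) := by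
      rw [← Finset.sum_filter_add_sum_filter_not Finset.univ (fun k => k ∈ T)]
      have h1 : Finset.univ.filter (fun k => k ∈ T) = T := by
        ext g; simp
      have h2 : Finset.univ.filter (fun k => ¬ k ∈ T) = Tᶜ := by
        ext g; simp
      rw [h1, h2, add_comm]
      congr 1
      · apply Finset.sum_congr rfl
        intro k hk
        rw [Finset.mem_compl] at hk
        rw [if_neg hk]
      · apply Finset.sum_congr rfl
        intro k hk
        rw [if_pos hk]
    rw [← hsplit, key_telescope q⁻¹ ht n T (lam - κ), hcard]
  rw [Finset.sum_congr rfl hT, ← Finset.sum_mul]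
  ring

lemma numerA_closed (n : ℕ) (q : ℂ) (hq : q ≠ 0) (lam : ℕ) (x : ℂ) (w : Fin n → ℂ) :
    numerA n 1 q⁻¹ q lam x (fun k _ => w k)
    = ∑ κ ∈ Finset.range (lam + 1), (-1 : ℂ) ^ κ * x ^ (lam - κ + 1)
        * (q⁻¹ ^ ((n : ℤ) * ((lam - κ : ℕ) : ℤ) + (κ : ℤ))
            - q⁻¹ ^ (-(n : ℤ) * ((lam - κ : ℕ) : ℤ) - (κ : ℤ)))
        * ∑ T ∈ (Finset.univ : Finset (Fin n)).powersetCard κ, ∏ g ∈ T, w g := by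
  rw [step1 n q hq lam x w, step2 n q hq lam x w, step3a n q hq lam x w,
    step3b n q hq lam x w, sub_neg_eq_add, step4 n q hq lam x w]

/-- for `m = 1` (with `z_i = z^{(n+1-i)}`), `A_λ^{(1)}` equals
the closed form above; in particular the latter is fully symmetric in
`(z₁,…,z_n)` and linear in each `z_j`. -/
theorem A_closed_form_m_one (n : ℕ) (hn : 2 ≤ n) (q : ℂ) (hq : q ≠ 0)
    (lam : ℕ) (z : Fin n → ℂ) :
    (∀ x : ℂ, x ≠ 0 →
        Afun q n 1 lam x (fun k _ => z ⟨n - 1 - (k : ℕ), by omega⟩) = Acl q n lam x z)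
      ∧ (∀ (x : ℂ) (σ : Equiv.Perm (Fin n)), Acl q n lam x (z ∘ σ) = Acl q n lam x z)
      ∧ (∀ (x : ℂ) (j : Fin n), ∃ u v : ℂ, ∀ t : ℂ,
          Acl q n lam x (Function.update z j t) = u + v * t) := by
  refine ⟨?_, ?_, ?_⟩
  · intro x hx
    have h := numerA_closed n q hq lam x (fun k => z ⟨n - 1 - (k : ℕ), by omega⟩)
    have hw : (fun k : Fin n => z ⟨n - 1 - (k : ℕ), by omega⟩)
        = z ∘ ⇑(Fin.revPerm : Equiv.Perm (Fin n)) := by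
      funext k
      simp only [Function.comp_apply]
      congr 1
      apply Fin.ext
      rw [Fin.revPerm_apply, Fin.val_rev]
      show n - 1 - (k : ℕ) = n - ((k : ℕ) + 1)
      omega
    have hsym : ∀ κ : ℕ, (∑ T ∈ (Finset.univ : Finset (Fin n)).powersetCard κ,
        ∏ g ∈ T, z ⟨n - 1 - (g : ℕ), by omega⟩) = esymF z κ := by
      intro κ
      have h0 : (∑ T ∈ (Finset.univ : Finset (Fin n)).powersetCard κ,
          ∏ g ∈ T, z ⟨n - 1 - (g : ℕ), by omega⟩)
          = esymF (fun k : Fin n => z ⟨n - 1 - (k : ℕ), by omega⟩) κ := rfl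
      rw [h0, hw, esymF_comp_equiv]
    have hAcl : x * Acl q n lam x z
        = ∑ κ ∈ Finset.range (lam + 1), (-1 : ℂ) ^ κ * x ^ (lam - κ + 1)
          * (q⁻¹ ^ ((n : ℤ) * ((lam - κ : ℕ) : ℤ) + (κ : ℤ))
              - q⁻¹ ^ (-(n : ℤ) * ((lam - κ : ℕ) : ℤ) - (κ : ℤ)))
          * ∑ T ∈ (Finset.univ : Finset (Fin n)).powersetCard κ,
              ∏ g ∈ T, z ⟨n - 1 - (g : ℕ), by omega⟩ := by
      unfold Acl
      rw [Finset.mul_sum]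
      apply Finset.sum_congr rfl
      intro κ _
      have hp1 : q⁻¹ ^ ((n : ℤ) * ((lam - κ : ℕ) : ℤ) + (κ : ℤ))
          = (q⁻¹ : ℂ) ^ (n * (lam - κ) + κ : ℕ) := by
        rw [← zpow_natCast]
        exact zpe q⁻¹ (by push_cast; ring)
      have hp2 : q⁻¹ ^ (-(n : ℤ) * ((lam - κ : ℕ) : ℤ) - (κ : ℤ))
          = (q : ℂ) ^ (n * (lam - κ) + κ : ℕ) := by
        rw [show (-(n : ℤ) * ((lam - κ : ℕ) : ℤ) - (κ : ℤ))
            = -(((n * (lam - κ) + κ : ℕ) : ℤ)) from by push_cast; ring]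
        rw [zpow_neg, inv_zpow, inv_inv, zpow_natCast]
      rw [hp1, hp2, hsym κ, pow_succ]
      ring
    unfold Afun
    rw [h, ← hAcl, mul_div_cancel_left₀ _ hx]
  · intro x σ
    unfold Acl
    apply Finset.sum_congr rfl
    intro κ _
    rw [esymF_comp_equiv z σ κ]
  · intro x j
    classical
    refine ⟨∑ κ ∈ Finset.range (lam + 1),
        (-1 : ℂ) ^ κ * x ^ (lam - κ) * ((q⁻¹) ^ (n * (lam - κ) + κ) - q ^ (n * (lam - κ) + κ))
          * (∑ S ∈ (Finset.univ.erase j).powersetCard κ, ∏ i ∈ S, z i),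
      ∑ κ ∈ Finset.range (lam + 1),
        (-1 : ℂ) ^ κ * x ^ (lam - κ) * ((q⁻¹) ^ (n * (lam - κ) + κ) - q ^ (n * (lam - κ) + κ))
          * (∑ S ∈ ((Finset.univ : Finset (Fin n)).powersetCard κ).filter (fun S => j ∈ S),
              ∏ i ∈ S.erase j, z i), ?_⟩
    intro t
    unfold Acl
    rw [Finset.sum_mul, ← Finset.sum_add_distrib]
    apply Finset.sum_congr rfl
    intro κ _
    rw [esymF_update z j κ t]
    ring
end
end
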